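/- Fix M > 0 and let φ₁ denote the density of the standard normal distribution. Then there exist C > 0 and ε₀ > 0 such that for all 0 < ε < ε₀ and all a ∈ ℝ with |a| ≤ M: | ∫_{{z : az ≤ 0}} z² e^{−a √ε z} φ₁(z) dz + ∫_{{z : az > 0}} z² φ₁(z) dz − 1 | ≤ C √ε. -/

import Mathlib

open MeasureTheory

/-- Density of the standard normal distribution. -/
noncomputable def stdGaussDensity (z : ℝ) : ℝ :=
  (Real.sqrt (2 * Real.pi))⁻¹ * Real.exp (-z ^ 2 / 2)

/-!
Against the standard Gaussian measure `γ` the second moment is `1`, so the quantity in question is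
`∫_{az ≤ 0} z² (e^{-a√ε z} - 1) dγ`. On `{az ≤ 0}` the exponent `t = -a√ε z` is nonnegative and at
most `M√ε |z|`, hence `0 ≤ e^t - 1 ≤ t e^t ≤ M√ε |z| e^{M|z|}` once `ε < 1`. The bound is therefore
`M√ε ∫ |z|³ e^{M|z|} dγ`, and this Gaussian moment is finite since `γ` has exponential moments
of every order.
-/

open ProbabilityTheory Real
open scoped NNReal

lemma exp_sub_one_le_mul_exp (t : ℝ) : exp t - 1 ≤ t * exp t := by
  have h : exp (-t) * exp t = 1 := by rw [← exp_add, neg_add_cancel, exp_zero]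
  nlinarith [add_one_le_exp (-t), exp_pos t]

lemma abs_sq_mul_exp_neg_sub_one_le {b c z : ℝ} (hbz : b * z ≤ 0) (hbc : |b| ≤ c) :
    |z ^ 2 * (exp (-(b * z)) - 1)| ≤ |b| * (|z| ^ 3 * exp (c * |z|)) := by
  have ht : -(b * z) = |b| * |z| := by rw [← abs_mul, abs_of_nonpos hbz]
  rw [abs_of_nonneg (mul_nonneg (sq_nonneg z) (sub_nonneg.2 (one_le_exp (by linarith))))]
  calc z ^ 2 * (exp (-(b * z)) - 1) ≤ z ^ 2 * (|b| * |z| * exp (c * |z|)) := by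
        gcongr
        calc exp (-(b * z)) - 1 ≤ -(b * z) * exp (-(b * z)) := exp_sub_one_le_mul_exp _
          _ ≤ |b| * |z| * exp (c * |z|) := by rw [ht]; gcongr
    _ = |b| * (|z| ^ 3 * exp (c * |z|)) := by rw [← sq_abs z]; ring

lemma abs_setIntegral_sq_mul_exp_neg_sub_one_le {μ : Measure ℝ} {s : Set ℝ} (hs : MeasurableSet s)
    {b c : ℝ} (hbs : ∀ z ∈ s, b * z ≤ 0) (hbc : |b| ≤ c)
    (hint : Integrable (fun z ↦ |z| ^ 3 * exp (c * |z|)) μ) :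
    |∫ z in s, z ^ 2 * (exp (-(b * z)) - 1) ∂μ| ≤ |b| * ∫ z, |z| ^ 3 * exp (c * |z|) ∂μ := by
  calc |∫ z in s, z ^ 2 * (exp (-(b * z)) - 1) ∂μ|
      ≤ ∫ z in s, |b| * (|z| ^ 3 * exp (c * |z|)) ∂μ := by
        rw [← Real.norm_eq_abs]
        exact norm_integral_le_of_norm_le (hint.integrableOn.const_mul _)
          (ae_restrict_of_forall_mem hs fun z hz ↦ abs_sq_mul_exp_neg_sub_one_le (hbs z hz) hbc)
    _ = |b| * ∫ z in s, |z| ^ 3 * exp (c * |z|) ∂μ := integral_const_mul _ _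
    _ ≤ |b| * ∫ z, |z| ^ 3 * exp (c * |z|) ∂μ :=
        mul_le_mul_of_nonneg_left
          (setIntegral_le_integral hint (ae_of_all _ fun z ↦ by positivity)) (abs_nonneg b)

section GaussianReal

variable {μ : ℝ} {v : ℝ≥0}

lemma integral_sq_gaussianReal : ∫ x, x ^ 2 ∂gaussianReal μ v = μ ^ 2 + v := by
  have h := variance_eq_sub (memLp_id_gaussianReal (μ := μ) (v := v) 2)
  simp only [variance_id_gaussianReal, Pi.pow_apply, id_eq, integral_id_gaussianReal] at h
  linarith

lemma integrable_pow_mul_exp_mul_gaussianReal (n : ℕ) (t : ℝ) :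
    Integrable (fun x ↦ x ^ n * exp (t * x)) (gaussianReal μ v) :=
  integrable_pow_mul_exp_of_mem_interior_integrableExpSet (X := id) (by simp) n

lemma integrable_pow_abs_mul_exp_mul_abs_gaussianReal (n : ℕ) (c : ℝ) :
    Integrable (fun x ↦ |x| ^ n * exp (c * |x|)) (gaussianReal μ v) := by
  have h (t : ℝ) : Integrable (fun x ↦ |x| ^ n * exp (t * x)) (gaussianReal μ v) :=
    integrable_pow_abs_mul_exp_of_mem_interior_integrableExpSet (X := id) (by simp) n
  refine ((h c).add (h (-c))).mono' (by fun_prop) (ae_of_all _ fun x ↦ ?_)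
  rw [norm_of_nonneg (by positivity), Pi.add_apply, ← mul_add]
  gcongr
  rcases le_total 0 x with hx | hx
  · rw [abs_of_nonneg hx]; linarith [exp_pos (-c * x)]
  · rw [abs_of_nonpos hx, mul_neg, ← neg_mul]; linarith [exp_pos (c * x)]

end GaussianReal

lemma stdGaussDensity_eq_gaussianPDFReal : stdGaussDensity = gaussianPDFReal 0 1 := by
  ext z
  simp [stdGaussDensity, gaussianPDFReal_def]

lemma setIntegral_mul_stdGaussDensity (g : ℝ → ℝ) {s : Set ℝ} (hs : MeasurableSet s) :
    ∫ z in s, g z * stdGaussDensity z = ∫ z in s, g z ∂gaussianReal 0 1 := by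
  rw [← integral_indicator hs, ← integral_indicator hs,
    integral_gaussianReal_eq_integral_smul one_ne_zero]
  congr 1 with z
  by_cases hz : z ∈ s <;> simp [hz, stdGaussDensity_eq_gaussianPDFReal, mul_comm]

lemma setIntegral_add_setIntegral_compl_stdGaussDensity_sub_one {s : Set ℝ}
    (hs : MeasurableSet s) (b : ℝ) :
    (∫ z in s, z ^ 2 * exp (-(b * z)) * stdGaussDensity z)
      + (∫ z in sᶜ, z ^ 2 * stdGaussDensity z) - 1
      = ∫ z in s, z ^ 2 * (exp (-(b * z)) - 1) ∂gaussianReal 0 1 := by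
  have hF : Integrable (fun z ↦ z ^ 2 * exp (-(b * z))) (gaussianReal 0 1) := by
    simpa only [neg_mul] using integrable_pow_mul_exp_mul_gaussianReal 2 (-b)
  have hsq : Integrable (fun z : ℝ ↦ z ^ 2) (gaussianReal 0 1) := by
    simpa using integrable_pow_mul_exp_mul_gaussianReal (μ := 0) (v := 1) 2 0
  have hone : ∫ z, z ^ 2 ∂gaussianReal 0 1 = 1 := by simp [integral_sq_gaussianReal]
  simp only [mul_sub, mul_one]
  rw [integral_sub hF.integrableOn hsq.integrableOn, setIntegral_mul_stdGaussDensity _ hs,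
    setIntegral_mul_stdGaussDensity _ hs.compl, ← hone, ← integral_add_compl hs hsq]
  ring

theorem gaussian_volatility_integral_general (M : ℝ) :
    ∃ C > (0:ℝ), ∃ ε₀ > (0:ℝ), ∀ ε a : ℝ, 0 < ε → ε < ε₀ → |a| ≤ M →
      |(∫ z in {z : ℝ | a * z ≤ 0},
            z ^ 2 * Real.exp (-(a * Real.sqrt ε * z)) * stdGaussDensity z)
          + (∫ z in {z : ℝ | 0 < a * z}, z ^ 2 * stdGaussDensity z)
          - 1|
        ≤ C * Real.sqrt ε := by
  set K := ∫ z, |z| ^ 3 * exp (M * |z|) ∂gaussianReal 0 1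
  refine ⟨max (M * K) 1, by positivity, 1, one_pos, fun ε a _ hε₁ ha ↦ ?_⟩
  set S := {z : ℝ | a * z ≤ 0}
  have hS : MeasurableSet S := measurableSet_le (by fun_prop) measurable_const
  have hSc : {z : ℝ | 0 < a * z} = Sᶜ := by ext; simp [S]
  have hb : |a * √ε| ≤ M * √ε := by
    rw [abs_mul, abs_of_nonneg (sqrt_nonneg ε)]; gcongr
  have hbM : M * √ε ≤ M :=
    mul_le_of_le_one_right ((abs_nonneg a).trans ha) (sqrt_le_one.2 hε₁.le)
  rw [hSc, setIntegral_add_setIntegral_compl_stdGaussDensity_sub_one hS]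
  calc _ ≤ |a * √ε| * K := abs_setIntegral_sq_mul_exp_neg_sub_one_le hS
          (fun z hz ↦ by nlinarith [sqrt_nonneg ε, show a * z ≤ 0 from hz]) (hb.trans hbM)
          (integrable_pow_abs_mul_exp_mul_abs_gaussianReal 3 M)
    _ ≤ M * √ε * K := by gcongr
    _ ≤ max (M * K) 1 * √ε := by
        rw [mul_right_comm]; gcongr; exact le_max_left _ _

/-- Core Gaussian second-moment (volatility) computation: uniformly in `|a| ≤ M`,
`∫_{az≤0} z² e^{−a√ε z} φ₁(z) dz + ∫_{az>0} z² φ₁(z) dz = 1 + O(√ε)`. -/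
theorem gaussian_volatility_integral (M : ℝ) (hM : 0 < M) :
    ∃ C > (0:ℝ), ∃ ε₀ > (0:ℝ), ∀ ε a : ℝ, 0 < ε → ε < ε₀ → |a| ≤ M →
      |(∫ z in {z : ℝ | a * z ≤ 0},
            z ^ 2 * Real.exp (-(a * Real.sqrt ε * z)) * stdGaussDensity z)
          + (∫ z in {z : ℝ | 0 < a * z}, z ^ 2 * stdGaussDensity z)
          - 1|
        ≤ C * Real.sqrt ε :=
  gaussian_volatility_integral_general M
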